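/- arXiv:1708.03942 — 2 statements merged into one kernel-verified Lean document; each statement's English description precedes it below -/
import Mathlib

section
/- Theorem 4.2(ii) (finite-sample inference on increases and decreases): Assume the regression model with truth f càdlàg, and let f̂_n be a multiscale change-point segmentation estimator with constants c, δ, interval system 𝓘, and threshold η = η(β) chosen as the (1−β)-quantile of T_𝓘(ξ^n; 0), i.e. η(β) = inf{t : P(T_𝓘(ξ^n;0) ≤ t) ≥ 1−β}. For I ∈ 𝓘 set r_I = 2·(η(β) + s_I)/√(n|I|). Then with probability at least 1−β the following holds simultaneously over all pairs I_1, I_2 ∈ 𝓘 on each of which f̂_n is constant: if m_{I_1}(f̂_n) > m_{I_2}(f̂_n) + r_{I_1} + r_{I_2}, then m_{I_1}(f) > m_{I_2}(f). -/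
open MeasureTheory Filter Set ProbabilityTheory
open scoped ENNReal NNReal

noncomputable section

/-- A function `f : ℝ → ℝ` is càdlàg on `[0,1)`: right-continuous (within `[0,1)`) at every
point of `[0,1)`, and with left-sided limits (within `[0,1)`) at every point of `(0,1]`. -/
def Cadlag (f : ℝ → ℝ) : Prop :=
  (∀ x ∈ Set.Ico (0:ℝ) 1, ContinuousWithinAt f (Set.Ico x 1) x) ∧
  (∀ x ∈ Set.Ioc (0:ℝ) 1, ∃ l : ℝ, Filter.Tendsto f (nhdsWithin x (Set.Ico 0 x)) (nhds l))

/-- A right-continuous step function on `[0,1)` with finitely many jumps, together with its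
set of jump locations. The function is constant between consecutive jump points, and has a
genuine jump at each point of `jumps`. -/
structure StepFn where
  toFun : ℝ → ℝ
  jumps : Finset ℝ
  jumps_mem : ∀ τ ∈ jumps, τ ∈ Set.Ioo (0:ℝ) 1
  const_between : ∀ x ∈ Set.Ico (0:ℝ) 1, ∀ y ∈ Set.Ico (0:ℝ) 1, x ≤ y →
    (∀ τ ∈ jumps, τ ∉ Set.Ioc x y) → toFun x = toFun y
  jump_at : ∀ τ ∈ jumps, ∀ ε > 0, ∃ x ∈ Set.Ico (0:ℝ) 1,
    τ - ε < x ∧ x < τ ∧ toFun x ≠ toFun τ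

instance : CoeFun StepFn (fun _ => ℝ → ℝ) := ⟨StepFn.toFun⟩

/-- Number of change-points `#J(f)` of a step function. -/
def StepFn.card (f : StepFn) : ℕ := f.jumps.card

/-- The `L^p([0,1))` (quasi-)norm, `p ∈ (0,∞]`, as a real number. -/
def LpNorm (p : ℝ≥0∞) (f : ℝ → ℝ) : ℝ :=
  (eLpNorm f p (volume.restrict (Set.Ico (0:ℝ) 1))).toReal

/-- The class `S_L(k)` of step functions with at most `k` jumps, uniformly bounded by `L`. -/
def SL (L : ℝ) (k : ℕ) : Set StepFn :=
  {f | f.card ≤ k ∧ ∀ x ∈ Set.Ico (0:ℝ) 1, |f.toFun x| ≤ L}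

/-- Approximation error `Δ_{q,k}(f)`: distance in `L^q([0,1))` from `f` to step functions
with at most `k` jumps. -/
def ApproxErr (q : ℝ≥0∞) (k : ℕ) (f : ℝ → ℝ) : ℝ :=
  sInf {v | ∃ g : StepFn, g.card ≤ k ∧ v = LpNorm q (fun x => f x - g.toFun x)}

/-- The approximation class `A^γ_{q,L}`. -/
def ApproxClass (γ : ℝ) (q : ℝ≥0∞) (L : ℝ) : Set (ℝ → ℝ) :=
  {f | Cadlag f ∧ (∀ k : ℕ, 1 ≤ k → (k : ℝ) ^ γ * ApproxErr q k f ≤ L) ∧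
    ∀ x ∈ Set.Ico (0:ℝ) 1, |f x| ≤ L}

/-- Intervals `[a,b)` are encoded as pairs `(a,b)`. An interval has its endpoints on the
grid `{i/n : i = 0,…,n}` and is nonempty. -/
def OnGrid (n : ℕ) (I : ℝ × ℝ) : Prop :=
  (∃ i : ℕ, i ≤ n ∧ I.1 = (i : ℝ) / n) ∧ (∃ i : ℕ, i ≤ n ∧ I.2 = (i : ℝ) / n) ∧ I.1 < I.2

/-- `c`-normal system of intervals (Definition 2.1). -/
def IsNormal (c : ℝ) (n : ℕ) (𝓘 : Set (ℝ × ℝ)) : Prop :=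
  (∀ a b : ℝ, 0 ≤ a → a < b → b ≤ 1 → c / n < b - a →
    ∃ I ∈ 𝓘, a ≤ I.1 ∧ I.2 ≤ b ∧ (b - a) / c ≤ I.2 - I.1) ∧
  (∀ I ∈ 𝓘, OnGrid n I) ∧
  (∀ i : ℕ, i < n → ((i : ℝ) / n, ((i : ℝ) + 1) / n) ∈ 𝓘)

/-- `f` is constant on the interval `[I.1, I.2)` (with value `f I.1`). -/
def ConstOn (f : ℝ → ℝ) (I : ℝ × ℝ) : Prop :=
  ∀ x ∈ Set.Ico I.1 I.2, f x = f I.1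

/-- The local statistic `(n|I|)^{-1/2} |Σ_{i/n ∈ I} (y_i - c_I)|`. -/
def localStat (n : ℕ) (y : Fin n → ℝ) (I : ℝ × ℝ) (cI : ℝ) : ℝ :=
  ((n : ℝ) * (I.2 - I.1)) ^ (-(1/2) : ℝ) *
    |∑ i : Fin n, if (i : ℝ) / n ∈ Set.Ico I.1 I.2 then y i - cI else 0|

/-- The multiscale statistic `T_𝓘(y; f)` (with values in `EReal`; it is `⊥` if `f` is
constant on no interval of `𝓘`). -/
def mstat (n : ℕ) (𝓘 : Set (ℝ × ℝ)) (s : ℝ × ℝ → ℝ) (y : Fin n → ℝ) (f : ℝ → ℝ) : EReal :=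
  sSup {v : EReal | ∃ I ∈ 𝓘, ConstOn f I ∧ v = ((localStat n y I (f I.1) - s I : ℝ) : EReal)}

/-- `fh` is a solution of the multiscale change-point segmentation problem (2.2):
it satisfies the multiscale constraint and minimizes the number of jumps among all step
functions satisfying the constraint. -/
def IsMCPSolution (n : ℕ) (𝓘 : Set (ℝ × ℝ)) (s : ℝ × ℝ → ℝ) (η : ℝ) (y : Fin n → ℝ)
    (fh : StepFn) : Prop :=
  mstat n 𝓘 s y fh.toFun ≤ (η : EReal) ∧
  ∀ g : StepFn, mstat n 𝓘 s y g.toFun ≤ (η : EReal) → fh.card ≤ g.card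

/-- Local average `f̄_i^n = n ∫_{[i/n,(i+1)/n)} f`. -/
def fbar (n : ℕ) (f : ℝ → ℝ) (i : Fin n) : ℝ :=
  n * ∫ x in Set.Ico ((i : ℝ) / n) (((i : ℝ) + 1) / n), f x

/-- The observations `y_i^n = f̄_i^n + ξ_i^n(ω)`. -/
def dataOf {Ω : Type*} (n : ℕ) (f : ℝ → ℝ) (ξ : Fin n → Ω → ℝ) (ω : Ω) : Fin n → ℝ :=
  fun i => fbar n f i + ξ i ω

/-- Local mean `m_I(f) = |I|⁻¹ ∫_I f`. -/
def localMean (I : ℝ × ℝ) (f : ℝ → ℝ) : ℝ :=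
  (I.2 - I.1)⁻¹ * ∫ x in Set.Ico I.1 I.2, f x

end

noncomputable section

/-- The threshold `η(β)`: the `(1-β)`-quantile of the null multiscale statistic
`T_𝓘(ξ^n; 0)`. -/
def quantileEta {Ω : Type} [MeasurableSpace Ω] (P : Measure Ω) (n : ℕ) (𝓘 : Set (ℝ × ℝ))
    (s : Ω → ℝ × ℝ → ℝ) (ξ : Fin n → Ω → ℝ) (β : ℝ) : ℝ :=
  sInf {t : ℝ | ENNReal.ofReal (1 - β) ≤
    P {ω | mstat n 𝓘 (s ω) (fun i => ξ i ω) (fun _ => 0) ≤ (t : EReal)}}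

end

/-! On the event `T_𝓘(ξ; 0) ≤ η(β)` the conclusion holds for every outcome. If `f̂` is constant
with value `c` on `I ∈ 𝓘`, the window sum over `I` of the noiseless data `f̄ - c` equals
`n|I| (m_I(f) - c)` and is the difference of the window sums of `y - c` and of `ξ`; scaled by
`(n|I|)^{-1/2}`, both are at most `η + s_I`, by the constraint `T_𝓘(y; f̂) ≤ η` and by the
event. Hence `|m_I(f̂) - m_I(f)| ≤ r_I`, so a gap larger than `r_{I₁} + r_{I₂}` between the
`f̂`-means forces the same order of the `f`-means. The event has probability at least `1 - β`
because `t ↦ P(T_𝓘(ξ; 0) ≤ t)` is right-continuous, so the quantile is attained. -/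

theorem le_measure_le_sInf_quantile {Ω : Type*} [MeasurableSpace Ω] (P : Measure Ω)
    [IsProbabilityMeasure P] (X : Ω → EReal) (hX : ∀ t : ℝ, MeasurableSet {ω | X ω ≤ t})
    (hX_top : ∀ ω, X ω ≠ ⊤) {p : ℝ≥0∞} (hp : p < 1) :
    p ≤ P {ω | X ω ≤ (sInf {t : ℝ | p ≤ P {ω | X ω ≤ t}} : ℝ)} := by
  set S := {t : ℝ | p ≤ P {ω | X ω ≤ t}}
  have hmono : Monotone fun t : ℝ => {ω | X ω ≤ t} := fun t t' h ω hω =>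
    hω.trans (EReal.coe_le_coe_iff.2 h)
  have hS_nonempty : S.Nonempty := by
    have hunion : (⋃ t : ℝ, {ω | X ω ≤ t}) = univ := by
      refine eq_univ_of_forall fun ω => mem_iUnion.2 ?_
      obtain ⟨t, ht, -⟩ := EReal.lt_iff_exists_real_btwn.1 (lt_top_iff_ne_top.2 (hX_top ω))
      exact ⟨t, ht.le⟩
    have : p < ⨆ t : ℝ, P {ω | X ω ≤ t} := by
      rwa [← hmono.measure_iUnion, hunion, measure_univ]
    obtain ⟨t, ht⟩ := lt_iSup_iff.1 this
    exact ⟨t, ht.le⟩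
  -- also when `S` is unbounded below and `sInf S = 0` is a junk value
  have hS_gt : ∀ r > sInf S, r ∈ S := by
    intro r hr
    obtain ⟨t, htS, htr⟩ : ∃ t ∈ S, t < r := by
      by_cases hbdd : BddBelow S
      · exact (csInf_lt_iff hbdd hS_nonempty).1 hr
      · exact not_bddBelow_iff.1 hbdd r
    exact htS.trans (measure_mono (hmono htr.le))
  have hinter : {ω | X ω ≤ (sInf S : ℝ)} = ⋂ r > sInf S, {ω | X ω ≤ r} := by
    ext ω
    simp only [mem_ofPred_eq, mem_iInter]
    exact ⟨fun h r hr => h.trans (EReal.coe_le_coe_iff.2 hr.le),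
      fun h => EReal.le_of_forall_lt_iff_le.1 fun z hz => h z (EReal.coe_lt_coe_iff.1 hz)⟩
  rw [hinter]
  refine ge_of_tendsto (tendsto_measure_biInter_gt (fun r _ => (hX r).nullMeasurableSet)
    (fun i j _ hij => hmono hij) ⟨sInf S + 1, by linarith, measure_ne_top P _⟩) ?_
  exact eventually_nhdsWithin_of_forall fun r hr => hS_gt r hr

theorem OnGrid.pos {n : ℕ} {I : ℝ × ℝ} (hI : OnGrid n I) : 0 < n := by
  obtain ⟨⟨i, -, hi⟩, ⟨k, -, hk⟩, hlt⟩ := hI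
  rcases Nat.eq_zero_or_pos n with rfl | hn
  · simp [hi, hk] at hlt
  · exact hn

theorem Set.Finite.of_forall_onGrid {n : ℕ} {𝓘 : Set (ℝ × ℝ)} (h𝓘 : ∀ I ∈ 𝓘, OnGrid n I) :
    𝓘.Finite := by
  have hgrid : ((fun i : ℕ => (i : ℝ) / n) '' Iic n).Finite := (finite_Iic n).image _
  refine (hgrid.prod hgrid).subset fun I hI => ?_
  obtain ⟨⟨i, hi, h₁⟩, ⟨k, hk, h₂⟩, -⟩ := h𝓘 I hI
  exact ⟨⟨i, hi, h₁.symm⟩, ⟨k, hk, h₂.symm⟩⟩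

theorem mstat_le_coe_iff {n : ℕ} {𝓘 : Set (ℝ × ℝ)} {s : ℝ × ℝ → ℝ} {y : Fin n → ℝ}
    {f : ℝ → ℝ} {t : ℝ} :
    mstat n 𝓘 s y f ≤ t ↔ ∀ I ∈ 𝓘, ConstOn f I → localStat n y I (f I.1) - s I ≤ t := by
  rw [mstat, sSup_le_iff]
  constructor
  · intro h I hI hf
    exact_mod_cast h _ ⟨I, hI, hf, rfl⟩
  · rintro h v ⟨I, hI, hf, rfl⟩
    exact_mod_cast h I hI hf

theorem mstat_ne_top {n : ℕ} {𝓘 : Set (ℝ × ℝ)} (h𝓘 : 𝓘.Finite) (s : ℝ × ℝ → ℝ)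
    (y : Fin n → ℝ) (f : ℝ → ℝ) : mstat n 𝓘 s y f ≠ ⊤ := by
  obtain ⟨b, hb⟩ := (h𝓘.image fun I => localStat n y I (f I.1) - s I).bddAbove
  refine ne_top_of_le_ne_top (EReal.coe_ne_top b) (mstat_le_coe_iff.2 fun I hI _ => ?_)
  exact hb ⟨I, hI, rfl⟩

theorem measurable_localStat {Ω : Type*} [MeasurableSpace Ω] {n : ℕ} {ξ : Fin n → Ω → ℝ}
    (hξ : ∀ i, Measurable (ξ i)) (I : ℝ × ℝ) (c : ℝ) :
    Measurable fun ω => localStat n (fun i => ξ i ω) I c := by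
  unfold localStat
  refine (Finset.measurable_sum _ fun i _ => ?_).abs.const_mul _
  exact Measurable.ite (MeasurableSet.const _) ((hξ i).sub_const c) measurable_const

theorem measurableSet_mstat_le {Ω : Type*} [MeasurableSpace Ω] {n : ℕ} {𝓘 : Set (ℝ × ℝ)}
    (h𝓘 : 𝓘.Finite) {s : Ω → ℝ × ℝ → ℝ} (hs : ∀ I, Measurable fun ω => s ω I)
    {ξ : Fin n → Ω → ℝ} (hξ : ∀ i, Measurable (ξ i)) (t : ℝ) :
    MeasurableSet {ω | mstat n 𝓘 (s ω) (fun i => ξ i ω) (fun _ => 0) ≤ t} := by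
  have : {ω | mstat n 𝓘 (s ω) (fun i => ξ i ω) (fun _ => 0) ≤ t}
      = ⋂ I ∈ 𝓘, {ω | localStat n (fun i => ξ i ω) I 0 - s ω I ≤ t} := by
    ext ω
    simp [mstat_le_coe_iff, ConstOn]
  rw [this]
  exact .biInter h𝓘.countable fun I _ =>
    measurableSet_le ((measurable_localStat hξ I 0).sub (hs I)) measurable_const

theorem sum_fin_ite_div_mem_Ico {n j k : ℕ} (hn : 0 < n) (hk : k ≤ n) (F : ℕ → ℝ) :
    (∑ i : Fin n, if ((i : ℕ) : ℝ) / n ∈ Ico ((j : ℝ) / n) ((k : ℝ) / n) then F i else 0)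
      = ∑ i ∈ Finset.Ico j k, F i := by
  have hn' : (0 : ℝ) < n := Nat.cast_pos.2 hn
  rw [Fin.sum_univ_eq_sum_range (fun i => if (i : ℝ) / n ∈ Ico ((j : ℝ) / n) ((k : ℝ) / n)
    then F i else 0), ← Finset.sum_filter]
  congr 1
  ext i
  simp only [Finset.mem_filter, Finset.mem_range, Finset.mem_Ico, mem_Ico,
    div_le_div_iff_of_pos_right hn', div_lt_div_iff_of_pos_right hn', Nat.cast_le, Nat.cast_lt]
  omega

theorem sum_setIntegral_Ico_of_monotone {a : ℕ → ℝ} (ha : Monotone a) {j k : ℕ} (hjk : j ≤ k)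
    {f : ℝ → ℝ} (hf : IntegrableOn f (Ico (a j) (a k))) :
    ∑ i ∈ Finset.Ico j k, ∫ x in Ico (a i) (a (i + 1)), f x = ∫ x in Ico (a j) (a k), f x := by
  have hf' : IntegrableOn f (Icc (a j) (a k)) := (integrableOn_Icc_iff_integrableOn_Ico).2 hf
  simp only [integral_Ico_eq_integral_Ioc]
  rw [← intervalIntegral.integral_of_le (ha hjk),
    ← intervalIntegral.sum_integral_adjacent_intervals_Ico hjk]
  · refine Finset.sum_congr rfl fun i _ => (intervalIntegral.integral_of_le (ha i.le_succ)).symm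
  · intro i hi
    obtain ⟨hji, hik⟩ := Set.mem_Ico.1 hi
    refine (hf'.mono_set ?_).intervalIntegrable
    rw [uIcc_of_le (ha i.le_succ)]
    exact Icc_subset_Icc (ha hji) (ha hik)

theorem sum_fbar_Ico {n j k : ℕ} (hjk : j ≤ k) (hk : k ≤ n) {f : ℝ → ℝ}
    (hf : IntegrableOn f (Ico 0 1)) :
    ∑ i ∈ Finset.Ico j k, n * ∫ x in Ico ((i : ℝ) / n) (((i : ℝ) + 1) / n), f x
      = n * ∫ x in Ico ((j : ℝ) / n) ((k : ℝ) / n), f x := by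
  have hmono : Monotone fun i : ℕ => (i : ℝ) / n := fun _ _ h =>
    div_le_div_of_nonneg_right (Nat.cast_le.2 h) n.cast_nonneg
  have hsub : Ico ((j : ℝ) / n) ((k : ℝ) / n) ⊆ Ico 0 1 :=
    Ico_subset_Ico (by positivity) (div_le_one_of_le₀ (by exact_mod_cast hk) (by positivity))
  rw [← Finset.mul_sum]
  congr 1
  exact_mod_cast sum_setIntegral_Ico_of_monotone hmono hjk (hf.mono_set hsub)

theorem localStat_fbar {n : ℕ} {I : ℝ × ℝ} (hI : OnGrid n I) {f : ℝ → ℝ}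
    (hf : IntegrableOn f (Ico 0 1)) (c : ℝ) :
    localStat n (fbar n f) I c = √(n * (I.2 - I.1)) * |localMean I f - c| := by
  have hn := hI.pos
  obtain ⟨⟨j, -, hj⟩, ⟨k, hk, hk'⟩, hlt⟩ := hI
  have hn' : (0 : ℝ) < n := Nat.cast_pos.2 hn
  have hjk : j < k := by
    rw [hj, hk', div_lt_div_iff_of_pos_right hn'] at hlt
    exact_mod_cast hlt
  set M := (n : ℝ) * (I.2 - I.1)
  have hM : M = (k - j : ℕ) := by
    simp only [M, Nat.cast_sub hjk.le, hj, hk']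
    field_simp
  have hMpos : 0 < M := by
    rw [hM]
    exact_mod_cast Nat.sub_pos_of_lt hjk
  have hsum : (∑ i : Fin n, if ((i : ℕ) : ℝ) / n ∈ Ico I.1 I.2 then fbar n f i - c else 0)
      = M * (localMean I f - c) := by
    simp only [hj, hk', fbar]
    rw [sum_fin_ite_div_mem_Ico hn hk
      (fun i => n * (∫ x in Ico ((i : ℝ) / n) (((i : ℝ) + 1) / n), f x) - c),
      Finset.sum_sub_distrib, sum_fbar_Ico hjk.le hk hf, Finset.sum_const, Nat.card_Ico,
      nsmul_eq_mul, ← hM, localMean, ← hj, ← hk']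
    field_simp [M, (sub_pos.2 hlt).ne']
    ring
  rw [localStat, hsum, abs_mul, abs_of_pos hMpos, Real.rpow_neg hMpos.le, ← Real.sqrt_eq_rpow]
  have hsq_pos : 0 < √M := Real.sqrt_pos.2 hMpos
  field_simp
  rw [Real.sq_sqrt hMpos.le]

theorem localStat_le_add {n : ℕ} {I : ℝ × ℝ} (hI : I.1 ≤ I.2) (a b : Fin n → ℝ) (c : ℝ) :
    localStat n a I c ≤ localStat n (fun i => a i + b i) I c + localStat n b I 0 := by
  have hw : 0 ≤ ((n : ℝ) * (I.2 - I.1)) ^ (-(1 / 2) : ℝ) :=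
    Real.rpow_nonneg (mul_nonneg n.cast_nonneg (sub_nonneg.2 hI)) _
  have hsplit : (∑ i : Fin n, if ((i : ℕ) : ℝ) / n ∈ Ico I.1 I.2 then a i - c else 0)
      = (∑ i : Fin n, if ((i : ℕ) : ℝ) / n ∈ Ico I.1 I.2 then a i + b i - c else 0)
        - ∑ i : Fin n, if ((i : ℕ) : ℝ) / n ∈ Ico I.1 I.2 then b i - 0 else 0 := by
    rw [← Finset.sum_sub_distrib]
    refine Finset.sum_congr rfl fun i _ => ?_
    split_ifs <;> ring
  simp only [localStat]
  rw [hsplit, ← mul_add]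
  exact mul_le_mul_of_nonneg_left (abs_sub _ _) hw

theorem localMean_eq_of_constOn {I : ℝ × ℝ} (hI : I.1 < I.2) {g : ℝ → ℝ} (hg : ConstOn g I) :
    localMean I g = g I.1 := by
  rw [localMean, setIntegral_congr_fun measurableSet_Ico hg, setIntegral_const,
    Real.volume_real_Ico_of_le hI.le, smul_eq_mul, inv_mul_cancel_left₀ (sub_pos.2 hI).ne']

theorem abs_localMean_sub_le {n : ℕ} {I : ℝ × ℝ} (hI : OnGrid n I) {f g : ℝ → ℝ}
    (hf : IntegrableOn f (Ico 0 1)) (hg : ConstOn g I) (z : Fin n → ℝ) {e : ℝ}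
    (hy : localStat n (fun i => fbar n f i + z i) I (g I.1) ≤ e) (hz : localStat n z I 0 ≤ e) :
    |localMean I g - localMean I f| ≤ 2 * e / √(n * (I.2 - I.1)) := by
  have hlen : 0 < (n : ℝ) * (I.2 - I.1) := mul_pos (Nat.cast_pos.2 hI.pos) (sub_pos.2 hI.2.2)
  have key : √(n * (I.2 - I.1)) * |localMean I f - g I.1| ≤ 2 * e := by
    rw [← localStat_fbar hI hf]
    linarith [localStat_le_add hI.2.2.le (fbar n f) z (g I.1)]
  rw [localMean_eq_of_constOn hI.2.2 hg, abs_sub_comm, le_div_iff₀ (Real.sqrt_pos.2 hlen)]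
  linarith

theorem abs_localMean_sub_le_of_mstat_le {n : ℕ} {𝓘 : Set (ℝ × ℝ)} (h𝓘 : ∀ I ∈ 𝓘, OnGrid n I)
    {s : ℝ × ℝ → ℝ} {f g : ℝ → ℝ} (hf : IntegrableOn f (Ico 0 1)) {z : Fin n → ℝ} {η : ℝ}
    (hg : mstat n 𝓘 s (fun i => fbar n f i + z i) g ≤ η)
    (hz : mstat n 𝓘 s z (fun _ => 0) ≤ η) {I : ℝ × ℝ} (hI : I ∈ 𝓘) (hgI : ConstOn g I) :
    |localMean I g - localMean I f| ≤ 2 * (η + s I) / √(n * (I.2 - I.1)) := by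
  refine abs_localMean_sub_le (h𝓘 I hI) hf hgI z ?_ ?_
  · linarith [mstat_le_coe_iff.1 hg I hI hgI]
  · linarith [mstat_le_coe_iff.1 hz I hI fun _ _ => rfl]

theorem finite_sample_shape_inference_general
    {Ω : Type} [MeasurableSpace Ω] (P : Measure Ω) [IsProbabilityMeasure P]
    (n : ℕ)
    (ξ : Fin n → Ω → ℝ)
    (hmeas : ∀ i, Measurable (ξ i))
    (f : ℝ → ℝ) (hfint : IntegrableOn f (Set.Ico (0:ℝ) 1))
    (c : ℝ)
    (𝓘 : Set (ℝ × ℝ)) (h𝓘 : IsNormal c n 𝓘)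
    (s : Ω → ℝ × ℝ → ℝ)
    (hsmeas : ∀ I, Measurable (fun ω => s ω I))
    (β : ℝ) (hβ : 0 < β)
    (fhat : Ω → StepFn)
    (hfhat : ∀ ω : Ω,
      IsMCPSolution n 𝓘 (s ω) (quantileEta P n 𝓘 s ξ β)
        (dataOf n f ξ ω) (fhat ω)) :
    ENNReal.ofReal (1 - β) ≤
      P {ω | ∀ I₁ ∈ 𝓘, ∀ I₂ ∈ 𝓘,
        ConstOn (fhat ω).toFun I₁ → ConstOn (fhat ω).toFun I₂ →
        localMean I₂ (fhat ω).toFun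
            + 2 * (quantileEta P n 𝓘 s ξ β + s ω I₁) / Real.sqrt (n * (I₁.2 - I₁.1))
            + 2 * (quantileEta P n 𝓘 s ξ β + s ω I₂) / Real.sqrt (n * (I₂.2 - I₂.1))
          < localMean I₁ (fhat ω).toFun →
        localMean I₂ f < localMean I₁ f} := by
  have h𝓘fin : 𝓘.Finite := .of_forall_onGrid h𝓘.2.1
  have hquantile := le_measure_le_sInf_quantile P
    (fun ω => mstat n 𝓘 (s ω) (fun i => ξ i ω) (fun _ => 0))
    (measurableSet_mstat_le h𝓘fin hsmeas hmeas) (fun ω => mstat_ne_top h𝓘fin _ _ _)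
    (ENNReal.ofReal_lt_one.2 (by linarith : 1 - β < 1))
  refine hquantile.trans (measure_mono fun ω hω I₁ hI₁ I₂ hI₂ h₁ h₂ hlt => ?_)
  have hbound := fun I (hI : I ∈ 𝓘) (hc : ConstOn (fhat ω).toFun I) =>
    abs_le.1 (abs_localMean_sub_le_of_mstat_le h𝓘.2.1 hfint (hfhat ω).1 hω hI hc)
  linarith [hbound I₁ hI₁ h₁, hbound I₂ hI₂ h₂]

/-- **Theorem 4.2(ii) (finite-sample inference on increases and decreases).**
With the quantile threshold `η(β)`, with probability at least `1-β`, simultaneously over all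
pairs `I₁, I₂ ∈ 𝓘` on which `f̂_n` is constant:
`m_{I₁}(f̂_n) > m_{I₂}(f̂_n) + r_{I₁} + r_{I₂}` implies `m_{I₁}(f) > m_{I₂}(f)`,
where `r_I = 2 (η(β) + s_I)/√(n|I|)`. -/
theorem finite_sample_shape_inference
    {Ω : Type} [MeasurableSpace Ω] (P : Measure Ω) [IsProbabilityMeasure P]
    (σ : ℝ) (hσ : 0 < σ)
    (n : ℕ) (hn : 1 ≤ n)
    (ξ : Fin n → Ω → ℝ)
    (hmeas : ∀ i, Measurable (ξ i))
    (hindep : iIndepFun ξ P)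
    (hcent : ∀ i, ∫ ω, ξ i ω ∂P = 0)
    (hintξ : ∀ i, Integrable (ξ i) P)
    (hsub : ∀ (i : Fin n) (u : ℝ),
      ∫⁻ ω, ENNReal.ofReal (Real.exp (u * ξ i ω)) ∂P
        ≤ ENNReal.ofReal (Real.exp (u ^ 2 * σ ^ 2 / 2)))
    (f : ℝ → ℝ) (hfcad : Cadlag f) (hfint : IntegrableOn f (Set.Ico (0:ℝ) 1))
    (c δ : ℝ) (hc : 1 < c) (hδ : 0 < δ)
    (𝓘 : Set (ℝ × ℝ)) (h𝓘 : IsNormal c n 𝓘)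
    (s : Ω → ℝ × ℝ → ℝ)
    (hsmeas : ∀ I, Measurable (fun ω => s ω I))
    (hs : ∀ᵐ ω ∂P, ∀ I ∈ 𝓘, |s ω I| ≤ δ * Real.sqrt (Real.log n))
    (β : ℝ) (hβ : 0 < β) (hβ1 : β < 1)
    (fhat : Ω → StepFn)
    (hfhat : ∀ ω : Ω,
      IsMCPSolution n 𝓘 (s ω) (quantileEta P n 𝓘 s ξ β)
        (dataOf n f ξ ω) (fhat ω)) :
    ENNReal.ofReal (1 - β) ≤
      P {ω | ∀ I₁ ∈ 𝓘, ∀ I₂ ∈ 𝓘,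
        ConstOn (fhat ω).toFun I₁ → ConstOn (fhat ω).toFun I₂ →
        localMean I₂ (fhat ω).toFun
            + 2 * (quantileEta P n 𝓘 s ξ β + s ω I₁) / Real.sqrt (n * (I₁.2 - I₁.1))
            + 2 * (quantileEta P n 𝓘 s ξ β + s ω I₂) / Real.sqrt (n * (I₂.2 - I₂.1))
          < localMean I₁ (fhat ω).toFun →
        localMean I₂ f < localMean I₁ f} :=
  finite_sample_shape_inference_general P n ξ hmeas f hfint c 𝓘 h𝓘 s hsmeas β hβ fhat hfhat
end

section
/- Deterministic good-noise estimate on common constancy intervals (key step in the proof of Theorem 3.1): Let n ≥ 2, let 𝓘 be a c-normal system of intervals with deterministic scale penalties satisfying sup_{I∈𝓘}|s_I| ≤ δ·√(log n), and let y ∈ ℝ^n. Suppose f, g ∈ S both satisfy the multiscale constraint T_𝓘(y; f) ≤ a·√(log n) and T_𝓘(y; g) ≤ a·√(log n) for some a > 0. Let I ⊆ [0,1) be an interval with |I| > c/n on which f is constant with value θ_f and g is constant with value θ_g. Then |θ_f − θ_g| ≤ 2·(a+δ)·√( c·log n/(n·|I|) ). -/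
open MeasureTheory Filter Set ProbabilityTheory
open scoped ENNReal NNReal

/-! The subinterval `Ĩ ∈ 𝓘` of `[α, β)` given by normality carries both constant values. On it
the two local sums differ by exactly `n|Ĩ| (θ_g - θ_f)`, while each is at most
`(a + δ) √(log n) · √(n|Ĩ|)` in absolute value by the two multiscale constraints; dividing by
`n|Ĩ| ≥ n (β - α) / c` gives the bound. -/

noncomputable def gridPoints (n : ℕ) (I : ℝ × ℝ) : Finset (Fin n) :=
  Finset.univ.filter fun i => (i : ℝ) / n ∈ Set.Ico I.1 I.2

namespace OnGrid

variable {n : ℕ} {I : ℝ × ℝ}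

theorem pos_s17 (hI : OnGrid n I) : 0 < n := by
  obtain ⟨⟨i, -, hi⟩, ⟨j, -, hj⟩, hlt⟩ := hI
  rcases Nat.eq_zero_or_pos n with rfl | hn
  · simp [hi, hj] at hlt
  · exact hn

theorem mul_length_pos (hI : OnGrid n I) : 0 < (n : ℝ) * (I.2 - I.1) :=
  mul_pos (by exact_mod_cast hI.pos_s17) (sub_pos.2 hI.2.2)

theorem card_gridPoints (hI : OnGrid n I) :
    ((gridPoints n I).card : ℝ) = n * (I.2 - I.1) := by
  have hn : (0 : ℝ) < n := by exact_mod_cast hI.pos_s17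
  obtain ⟨⟨i, -, hi⟩, ⟨j, hjn, hj⟩, hlt⟩ := hI
  rw [hi, hj, div_lt_div_iff_of_pos_right hn, Nat.cast_lt] at hlt
  have hmap : (gridPoints n I).map Fin.valEmbedding = Finset.Ico i j := by
    ext k
    simp only [gridPoints, Finset.mem_map, Finset.mem_filter, Finset.mem_univ, true_and,
      Set.mem_Ico, hi, hj, div_le_div_iff_of_pos_right hn, div_lt_div_iff_of_pos_right hn,
      Nat.cast_le, Nat.cast_lt, Fin.valEmbedding_apply, Finset.mem_Ico]
    exact ⟨fun ⟨k', hk', hkk'⟩ => hkk' ▸ hk', fun hk => ⟨⟨k, by omega⟩, hk, rfl⟩⟩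
  rw [← Finset.card_map Fin.valEmbedding, hmap, Nat.card_Ico, Nat.cast_sub hlt.le, hi, hj]
  field_simp

theorem localStat_eq (hI : OnGrid n I) (y : Fin n → ℝ) (θ : ℝ) :
    localStat n y I θ =
      |∑ i ∈ gridPoints n I, y i - n * (I.2 - I.1) * θ| / √(n * (I.2 - I.1)) := by
  rw [localStat, ← Finset.sum_filter, Finset.sum_sub_distrib, Finset.sum_const, nsmul_eq_mul,
    ← gridPoints, hI.card_gridPoints, Real.rpow_neg hI.mul_length_pos.le, ← Real.sqrt_eq_rpow, inv_mul_eq_div]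

theorem sqrt_mul_abs_sub_le_localStat_add (hI : OnGrid n I) (y : Fin n → ℝ) (θ θ' : ℝ) :
    √(n * (I.2 - I.1)) * |θ - θ'| ≤ localStat n y I θ + localStat n y I θ' := by
  rw [hI.localStat_eq, hI.localStat_eq, ← add_div]
  set K : ℝ := n * (I.2 - I.1)
  set S := ∑ i ∈ gridPoints n I, y i
  have hK : 0 < K := hI.mul_length_pos
  rw [le_div_iff₀ (Real.sqrt_pos.2 hK)]
  calc √K * |θ - θ'| * √K = |(S - K * θ') - (S - K * θ)| := by
        rw [mul_right_comm, Real.mul_self_sqrt hK.le, sub_sub_sub_cancel_left, ← mul_sub,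
          abs_mul, abs_of_pos hK]
    _ ≤ |S - K * θ| + |S - K * θ'| := by
        rw [add_comm]; exact abs_sub _ _

end OnGrid

theorem localStat_le_of_mstat_le {n : ℕ} {𝓘 : Set (ℝ × ℝ)} {s : ℝ × ℝ → ℝ}
    {y : Fin n → ℝ} {φ : ℝ → ℝ} {η δ : ℝ} (hφ : mstat n 𝓘 s y φ ≤ η)
    (hs : ∀ I ∈ 𝓘, |s I| ≤ δ) {I : ℝ × ℝ} (hI : I ∈ 𝓘) (hconst : ConstOn φ I) :
    localStat n y I (φ I.1) ≤ η + δ := by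
  have hle : ((localStat n y I (φ I.1) - s I : ℝ) : EReal) ≤ mstat n 𝓘 s y φ :=
    le_sSup ⟨I, hI, hconst, rfl⟩
  have hstat : localStat n y I (φ I.1) - s I ≤ η := EReal.coe_le_coe_iff.1 (hle.trans hφ)
  linarith [(abs_le.1 (hs I hI)).2]

theorem good_noise_constancy_estimate_general
    (n : ℕ)
    (c δ : ℝ) (hc : 1 < c)
    (𝓘 : Set (ℝ × ℝ)) (h𝓘 : IsNormal c n 𝓘)
    (s : ℝ × ℝ → ℝ) (hs : ∀ I ∈ 𝓘, |s I| ≤ δ * Real.sqrt (Real.log n))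
    (y : Fin n → ℝ)
    (a : ℝ)
    (f g : StepFn)
    (hf : mstat n 𝓘 s y f.toFun ≤ ((a * Real.sqrt (Real.log n) : ℝ) : EReal))
    (hg : mstat n 𝓘 s y g.toFun ≤ ((a * Real.sqrt (Real.log n) : ℝ) : EReal))
    (α β : ℝ) (hα : 0 ≤ α) (hβ : β ≤ 1) (hlen : c / n < β - α)
    (θf θg : ℝ)
    (hfconst : ∀ x ∈ Set.Ico α β, f.toFun x = θf)
    (hgconst : ∀ x ∈ Set.Ico α β, g.toFun x = θg) :
    |θf - θg| ≤ 2 * (a + δ) * Real.sqrt (c * Real.log n / (n * (β - α))) := by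
  have hc0 : 0 < c := one_pos.trans hc
  have hαβ : α < β := (div_nonneg hc0.le n.cast_nonneg).trans_lt hlen |> sub_pos.1
  obtain ⟨I, hI𝓘, hαI, hIβ, hIlen⟩ := h𝓘.1 α β hα hαβ hβ hlen
  have hIgrid : OnGrid n I := h𝓘.2.1 I hI𝓘
  have hI₁ : I.1 ∈ Set.Ico α β := ⟨hαI, hIgrid.2.2.trans_le hIβ⟩
  have hconstOn {φ : ℝ → ℝ} {θ : ℝ} (h : ∀ x ∈ Set.Ico α β, φ x = θ) : ConstOn φ I :=
    fun x hx => (h x ⟨hαI.trans hx.1, hx.2.trans_le hIβ⟩).trans (h _ hI₁).symm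
  have hfI := localStat_le_of_mstat_le hf hs hI𝓘 (hconstOn hfconst)
  have hgI := localStat_le_of_mstat_le hg hs hI𝓘 (hconstOn hgconst)
  rw [hfconst _ hI₁] at hfI
  rw [hgconst _ hI₁] at hgI
  have hclose := hIgrid.sqrt_mul_abs_sub_le_localStat_add y θf θg
  have hm : 0 < n * (β - α) / c := by
    have : (0 : ℝ) < n := by exact_mod_cast hIgrid.pos_s17
    have := sub_pos.2 hαβ
    positivity
  have hmK : n * (β - α) / c ≤ n * (I.2 - I.1) := by
    rw [mul_div_assoc]
    exact mul_le_mul_of_nonneg_left hIlen n.cast_nonneg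
  calc |θf - θg| ≤ 2 * (a + δ) * √(Real.log n) / √(n * (β - α) / c) := by
        rw [le_div_iff₀' (Real.sqrt_pos.2 hm)]
        exact (mul_le_mul_of_nonneg_right (Real.sqrt_le_sqrt hmK) (abs_nonneg _)).trans
          (by linarith)
    _ = 2 * (a + δ) * √(c * Real.log n / (n * (β - α))) := by
        rw [mul_div_assoc, ← Real.sqrt_div' _ hm.le, div_div_eq_mul_div, mul_comm (Real.log n)]

/-- **Deterministic good-noise estimate on common constancy intervals**
(key step in the proof of Theorem 3.1). If two step functions `f, g` both satisfy the
multiscale constraint at level `a √(log n)` over a `c`-normal system and are constant, with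
values `θ_f, θ_g`, on a common interval `[α, β)` with `β - α > c/n`, then
`|θ_f - θ_g| ≤ 2 (a + δ) √(c log n / (n (β - α)))`. -/
theorem good_noise_constancy_estimate
    (n : ℕ) (hn : 2 ≤ n)
    (c δ : ℝ) (hc : 1 < c) (hδ : 0 < δ)
    (𝓘 : Set (ℝ × ℝ)) (h𝓘 : IsNormal c n 𝓘)
    (s : ℝ × ℝ → ℝ) (hs : ∀ I ∈ 𝓘, |s I| ≤ δ * Real.sqrt (Real.log n))
    (y : Fin n → ℝ)
    (a : ℝ) (ha : 0 < a)
    (f g : StepFn)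
    (hf : mstat n 𝓘 s y f.toFun ≤ ((a * Real.sqrt (Real.log n) : ℝ) : EReal))
    (hg : mstat n 𝓘 s y g.toFun ≤ ((a * Real.sqrt (Real.log n) : ℝ) : EReal))
    (α β : ℝ) (hα : 0 ≤ α) (hβ : β ≤ 1) (hlen : c / n < β - α)
    (θf θg : ℝ)
    (hfconst : ∀ x ∈ Set.Ico α β, f.toFun x = θf)
    (hgconst : ∀ x ∈ Set.Ico α β, g.toFun x = θg) :
    |θf - θg| ≤ 2 * (a + δ) * Real.sqrt (c * Real.log n / (n * (β - α))) :=
  good_noise_constancy_estimate_general n c δ hc 𝓘 h𝓘 s hs y a f g hf hg α β hα hβ hlen θf θg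
    hfconst hgconst
end
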